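/- Let d be a positive integer, χ a Dirichlet character mod d, and ξ a root of unity with ξ^d = 1. Then for n ≥ 1 and any positive integer N, ∑_{l=0}^{Nd−1} χ(l) ξ^l l^{n−1} = (1/n)(B_{n,χ,ξ}(Nd) − B_{n,χ,ξ}(0)) where B_{n,χ,ξ}(x) are the generalized twisted Bernoulli polynomials; equivalently n·T_{n−1,χ,ξ}(Nd−1) = B_{n,χ,ξ}(Nd) − B_{n,χ,ξ}(0). -/

import Mathlib

/-- `e^{at}` as a formal power series over `ℂ`. -/
noncomputable def expS (a : ℂ) : PowerSeries ℂ :=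
  PowerSeries.mk fun n => a ^ n / n.factorial

lemma expS_eq_rescale (a : ℂ) : expS a = PowerSeries.rescale a (PowerSeries.exp ℂ) := by
  ext n
  simp only [expS, PowerSeries.coeff_mk, PowerSeries.coeff_rescale, PowerSeries.coeff_exp]
  rw [eq_ratCast (algebraMap ℚ ℂ)]
  push_cast
  ring

lemma expS_mul (a b : ℂ) : expS a * expS b = expS (a + b) := by
  simp only [expS_eq_rescale]
  exact PowerSeries.exp_mul_exp_eq_exp_add a b

lemma expS_zero : expS 0 = 1 := by
  ext n
  simp [expS, PowerSeries.coeff_one, zero_pow_eq]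
  rcases n with _ | n <;> simp

lemma expS_sub_one_ne (d : ℕ) (hd : 0 < d) : expS d - 1 ≠ 0 := by
  intro h
  have := congrArg (PowerSeries.coeff 1) h
  simp [expS] at this
  exact absurd this (Nat.cast_ne_zero.mpr hd.ne')

lemma coeff_expS (m : ℕ) (a : ℂ) :
    PowerSeries.coeff m (expS a) = a ^ m / m.factorial := by
  simp [expS]

lemma geom_expS (d N : ℕ) :
    expS ((N * d : ℕ) : ℂ) - 1 =
      (expS d - 1) * ∑ j ∈ Finset.range N, expS ((j * d : ℕ) : ℂ) := by
  induction N with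
  | zero => simp [expS_zero]
  | succ N ih =>
    rw [Finset.sum_range_succ, mul_add, ← ih,
      show (((N + 1) * d : ℕ) : ℂ) = ((N * d : ℕ) : ℂ) + d by push_cast; ring, ← expS_mul]
    ring

lemma reindex_sum (d N : ℕ) (f : ℕ → ℂ) :
    ∑ l ∈ Finset.range (N * d), f l =
      ∑ j ∈ Finset.range N, ∑ a ∈ Finset.range d, f (j * d + a) := by
  induction N with
  | zero => simp
  | succ N ih =>
    rw [show (N + 1) * d = N * d + d by ring, Finset.sum_range_add, ih, Finset.sum_range_succ]

/-- When `ξ^d = 1`, the twisted character power sum is given by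
`∑_{l=0}^{Nd-1} χ(l) ξ^l l^{n-1} = (B_{n,χ,ξ}(Nd) - B_{n,χ,ξ}(0))/n` for `n ≥ 1`. -/
theorem generalized_twisted_bernoulli_power_sum_formula
    (d : ℕ) (hd : 0 < d) (ξ : ℂ) (hξ : ξ ^ d = 1)
    (χ : DirichletCharacter ℂ d) (B : ℕ → ℂ → ℂ)
    (hB : ∀ x : ℂ,
      (PowerSeries.mk fun n => B n x / n.factorial) *
          (PowerSeries.C (R := ℂ) (ξ ^ d) * expS d - 1) =
        PowerSeries.X *
          (∑ a ∈ Finset.range d, PowerSeries.C (R := ℂ) (χ (a : ZMod d) * ξ ^ a) * expS a) * expS x)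
    (n N : ℕ) (hn : 1 ≤ n) (hN : 0 < N) :
    ∑ l ∈ Finset.range (N * d), χ (l : ZMod d) * ξ ^ l * (l : ℂ) ^ (n - 1) =
      (B n ((N * d : ℕ) : ℂ) - B n 0) / (n : ℂ) := by
  obtain ⟨m, rfl⟩ : ∃ m, n = m + 1 := ⟨n - 1, (Nat.succ_pred_eq_of_pos hn).symm⟩
  set S : PowerSeries ℂ :=
    ∑ a ∈ Finset.range d, PowerSeries.C (R := ℂ) (χ (a : ZMod d) * ξ ^ a) * expS a with hS
  have hB' : ∀ x : ℂ,
      (PowerSeries.mk fun k => B k x / k.factorial) * (expS d - 1) =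
        PowerSeries.X * S * expS x := by
    intro x
    have := hB x
    rwa [hξ, map_one, one_mul] at this
  have key : (PowerSeries.mk fun k => B k ((N * d : ℕ) : ℂ) / k.factorial)
      - (PowerSeries.mk fun k => B k 0 / k.factorial)
      = PowerSeries.X * S * ∑ j ∈ Finset.range N, expS ((j * d : ℕ) : ℂ) := by
    apply mul_right_cancel₀ (expS_sub_one_ne d hd)
    calc ((PowerSeries.mk fun k => B k ((N * d : ℕ) : ℂ) / k.factorial)
          - PowerSeries.mk fun k => B k 0 / k.factorial) * (expS d - 1)
        = PowerSeries.X * S * (expS ((N * d : ℕ) : ℂ) - 1) := by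
          rw [sub_mul, hB', hB', expS_zero]; ring
      _ = PowerSeries.X * S *
            ((expS d - 1) * ∑ j ∈ Finset.range N, expS ((j * d : ℕ) : ℂ)) := by
          rw [geom_expS]
      _ = PowerSeries.X * S * (∑ j ∈ Finset.range N, expS ((j * d : ℕ) : ℂ)) *
            (expS d - 1) := by ring
  have hc := congrArg (PowerSeries.coeff (m + 1)) key
  rw [map_sub] at hc
  simp only [PowerSeries.coeff_mk] at hc
  rw [mul_assoc, PowerSeries.coeff_succ_X_mul] at hc
  have hSsum : PowerSeries.coeff m (S * ∑ j ∈ Finset.range N, expS ((j * d : ℕ) : ℂ))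
      = ∑ a ∈ Finset.range d, ∑ j ∈ Finset.range N,
          χ (a : ZMod d) * ξ ^ a * (((j * d + a : ℕ) : ℂ) ^ m / m.factorial) := by
    rw [hS, Finset.sum_mul_sum, map_sum]
    refine Finset.sum_congr rfl fun a _ => ?_
    rw [map_sum]
    refine Finset.sum_congr rfl fun j _ => ?_
    rw [mul_assoc, expS_mul, PowerSeries.coeff_C_mul, coeff_expS]
    congr 2
    push_cast
    ring
  rw [hSsum] at hc
  simp only [Nat.add_sub_cancel]
  rw [reindex_sum d N (fun l => χ (l : ZMod d) * ξ ^ l * (l : ℂ) ^ m)]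
  have hterm : ∀ j a : ℕ, a ∈ Finset.range d →
      χ ((j * d + a : ℕ) : ZMod d) * ξ ^ (j * d + a) * ((j * d + a : ℕ) : ℂ) ^ m
        = χ (a : ZMod d) * ξ ^ a * ((j * d + a : ℕ) : ℂ) ^ m := by
    intro j a _
    have hχ : ((j * d + a : ℕ) : ZMod d) = (a : ZMod d) := by
      push_cast
      simp [ZMod.natCast_self]
    have hξ' : ξ ^ (j * d + a) = ξ ^ a := by
      rw [pow_add, mul_comm j d, pow_mul, hξ, one_pow, one_mul]
    rw [hχ, hξ']
  have hrw : ∑ j ∈ Finset.range N, ∑ a ∈ Finset.range d,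
        χ ((j * d + a : ℕ) : ZMod d) * ξ ^ (j * d + a) * ((j * d + a : ℕ) : ℂ) ^ m
      = ∑ a ∈ Finset.range d, ∑ j ∈ Finset.range N,
          χ (a : ZMod d) * ξ ^ a * ((j * d + a : ℕ) : ℂ) ^ m := by
    rw [Finset.sum_comm]
    exact Finset.sum_congr rfl fun a ha => Finset.sum_congr rfl fun j _ => hterm j a ha
  rw [hrw]
  have hm : (m.factorial : ℂ) ≠ 0 := Nat.cast_ne_zero.mpr m.factorial_ne_zero
  have expand : ∑ a ∈ Finset.range d, ∑ j ∈ Finset.range N,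
      χ (a : ZMod d) * ξ ^ a * ((j * d + a : ℕ) : ℂ) ^ m
      = (m.factorial : ℂ) * ∑ a ∈ Finset.range d, ∑ j ∈ Finset.range N,
          χ (a : ZMod d) * ξ ^ a * (((j * d + a : ℕ) : ℂ) ^ m / m.factorial) := by
    rw [Finset.mul_sum]
    refine Finset.sum_congr rfl fun a _ => ?_
    rw [Finset.mul_sum]
    refine Finset.sum_congr rfl fun j _ => ?_
    field_simp
  rw [expand, ← hc, Nat.factorial_succ]
  have hm1 : ((m : ℂ) + 1) ≠ 0 := by
    have : ((m + 1 : ℕ) : ℂ) ≠ 0 := Nat.cast_ne_zero.mpr (Nat.succ_ne_zero m)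
    push_cast at this
    exact this
  push_cast
  field_simp
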